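/- For all natural numbers n, m and every real number a, the top linearization coefficient of the Bessel polynomials is β_{n+m}^{(n,m)}(a) = a^n (1−a)^m · (1/2)_{n+m} / ((1/2)_n (1/2)_m). -/

import Mathlib

/-!
Both sides of the linearization identity are polynomials in `u` of degree at most `n + m`, so
their coefficients of `u ^ (n + m)` agree. On the left this coefficient is the product of the
leading coefficients of `q_n(a u)` and `q_m((1 - a) u)`; on the right only `q_{n+m}` reaches
that degree. The leading coefficient of `q_k` is `2^k k! / (2k)! = 1 / (2^k (1/2)_k)`.
-/

open Finset

/-- The Bessel polynomial `q_n`, normalized so that `q_n(0) = 1`. -/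
noncomputable def besselQ (n : ℕ) (u : ℝ) : ℝ :=
  ∑ k ∈ Finset.range (n + 1),
    ((n.factorial : ℝ) * (2 * n - k).factorial * 2 ^ k) /
      ((2 * n).factorial * (n - k).factorial * k.factorial) * u ^ k

/-- The Pochhammer symbol `(x)_j = x (x+1) ⋯ (x+j-1)`. -/
noncomputable def poch (x : ℝ) (j : ℕ) : ℝ := ∏ i ∈ Finset.range j, (x + i)

/-- Generalized binomial coefficient with integer (possibly negative) upper entry. -/
noncomputable def gbinom (z : ℤ) (j : ℕ) : ℝ :=
  (∏ i ∈ Finset.range j, ((z : ℝ) - i)) / j.factorial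

open Polynomial

noncomputable def besselCoeff (n k : ℕ) : ℝ :=
  ((n.factorial : ℝ) * (2 * n - k).factorial * 2 ^ k) /
    ((2 * n).factorial * (n - k).factorial * k.factorial)

noncomputable def besselPoly (n : ℕ) (c : ℝ) : ℝ[X] :=
  ∑ k ∈ range (n + 1), C (besselCoeff n k * c ^ k) * X ^ k

lemma eval_besselPoly (n : ℕ) (c u : ℝ) : (besselPoly n c).eval u = besselQ n (c * u) := by
  simp only [besselPoly, besselQ, besselCoeff, eval_finsetSum, eval_mul, eval_C, eval_pow, eval_X,
    mul_pow, mul_assoc]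

lemma natDegree_besselPoly_le (n : ℕ) (c : ℝ) : (besselPoly n c).natDegree ≤ n :=
  natDegree_sum_le_of_forall_le _ _ fun k hk =>
    (natDegree_C_mul_X_pow_le _ k).trans (Nat.lt_succ_iff.mp (mem_range.mp hk))

lemma coeff_besselPoly_self (n : ℕ) (c : ℝ) :
    (besselPoly n c).coeff n = besselCoeff n n * c ^ n := by
  simp only [besselPoly, finsetSum_coeff, coeff_C_mul_X_pow]
  simp

lemma poch_half_eq (k : ℕ) :
    poch (1 / 2) k = ((2 * k).factorial : ℝ) / (4 ^ k * k.factorial) := by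
  induction k with
  | zero => simp [poch]
  | succ k ih =>
    rw [poch, prod_range_succ, ← poch, ih, show 2 * (k + 1) = 2 * k + 1 + 1 by ring,
      Nat.factorial_succ, Nat.factorial_succ, Nat.factorial_succ]
    push_cast
    field_simp
    ring

lemma poch_half_pos (k : ℕ) : 0 < poch (1 / 2) k :=
  prod_pos fun i _ => by positivity

lemma besselCoeff_self (k : ℕ) : besselCoeff k k = (2 ^ k * poch (1 / 2) k)⁻¹ := by
  rw [besselCoeff, poch_half_eq, show 2 * k - k = k by omega, Nat.sub_self,
    show (4 : ℝ) ^ k = 2 ^ k * 2 ^ k by rw [← mul_pow]; norm_num]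
  simp only [Nat.factorial_zero, Nat.cast_one, mul_one]
  field_simp

lemma coeff_sum_C_mul_of_natDegree_le {R : Type*} [Semiring R] (p : ℕ → R[X])
    (hp : ∀ k, (p k).natDegree ≤ k) (β : ℕ → R) (N : ℕ) :
    (∑ k ∈ range (N + 1), C (β k) * p k).coeff N = β N * (p N).coeff N := by
  rw [finsetSum_coeff, sum_range_succ, sum_eq_zero, zero_add, coeff_C_mul]
  intro k hk
  rw [coeff_C_mul, coeff_eq_zero_of_natDegree_lt ((hp k).trans_lt (mem_range.mp hk)), mul_zero]

theorem bessel_linearization_top_coefficient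
    (n m : ℕ) (a : ℝ) (β : ℕ → ℝ)
    (hβ : ∀ u : ℝ, besselQ n (a * u) * besselQ m ((1 - a) * u) =
      ∑ k ∈ Finset.range (n + m + 1), β k * besselQ k u) :
    β (n + m) = a ^ n * (1 - a) ^ m * poch (1/2) (n + m) / (poch (1/2) n * poch (1/2) m) := by
  have hpoly : besselPoly n a * besselPoly m (1 - a) =
      ∑ k ∈ range (n + m + 1), C (β k) * besselPoly k 1 :=
    Polynomial.funext fun u => by
      simp only [eval_mul, eval_finsetSum, eval_C, eval_besselPoly, one_mul, hβ]
  have htop := congrArg (coeff · (n + m)) hpoly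
  simp only [coeff_mul_add_eq_of_natDegree_le (natDegree_besselPoly_le n a)
      (natDegree_besselPoly_le m (1 - a)),
    coeff_sum_C_mul_of_natDegree_le (besselPoly · 1) (natDegree_besselPoly_le · 1),
    coeff_besselPoly_self, besselCoeff_self, one_pow, mul_one] at htop
  have hn := (poch_half_pos n).ne'
  have hm := (poch_half_pos m).ne'
  have hnm := (poch_half_pos (n + m)).ne'
  rw [pow_add] at htop
  field_simp at htop
  rw [eq_div_iff (mul_ne_zero hn hm)]
  linear_combination -htop
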